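/- arXiv:0805.2782 — 3 statements merged into one kernel-verified Lean document; each statement's English description precedes it below -/
import Mathlib

section
/- Let λ be a strict partition of n with o odd parts and e even parts. If o ≥ e then every bar tableau of shape λ has at least o bars; if o < e then every bar tableau has at least e + (ℓ(λ) mod 2) bars. (Lower bound half of Clifford's srank formula.) -/
/-- Number of cells of the shifted diagram of `lam` filled with value `v`
(row `i` has cells with local column indices `0 ≤ j < lam_i`). -/
def cellCount (lam : List ℕ) (f : ℕ → ℕ → ℕ) (v : ℕ) : ℕ :=
  ∑ i ∈ Finset.range lam.length,
    ((Finset.range (lam.getD i 0)).filter (fun j => f i j = v)).card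

/-- The set of rows in which value `v` appears. -/
def rowsOf (lam : List ℕ) (f : ℕ → ℕ → ℕ) (v : ℕ) : Finset ℕ :=
  (Finset.range lam.length).filter
    (fun i => ∃ j ∈ Finset.range (lam.getD i 0), f i j = v)

/-- Number of cells of row `i` filled with a value `≤ v`. -/
def partialCount (lam : List ℕ) (f : ℕ → ℕ → ℕ) (v i : ℕ) : ℕ :=
  ((Finset.range (lam.getD i 0)).filter (fun j => f i j ≤ v)).card

/-- A bar tableau of shape the strict partition `lam`: a filling of the shifted
diagram with positive integers, weakly increasing in rows, each value occurring
an odd number of times, each value in at most two rows (both of which must begin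
with this value if there are two), and all partial shapes having distinct parts. -/
def IsBarTableau (lam : List ℕ) (f : ℕ → ℕ → ℕ) : Prop :=
  (∀ i j, i < lam.length → j < lam.getD i 0 → 1 ≤ f i j) ∧
  (∀ i j j', i < lam.length → j ≤ j' → j' < lam.getD i 0 → f i j ≤ f i j') ∧
  (∀ v, 1 ≤ v → cellCount lam f v = 0 ∨ Odd (cellCount lam f v)) ∧
  (∀ v, 1 ≤ v → (rowsOf lam f v).card ≤ 2 ∧
    ((rowsOf lam f v).card = 2 → ∀ i ∈ rowsOf lam f v, f i 0 = v)) ∧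
  (∀ v i i', 1 ≤ v → i < i' → i' < lam.length →
    partialCount lam f v i ≠ 0 → partialCount lam f v i' ≠ 0 →
    partialCount lam f v i ≠ partialCount lam f v i')

/-- The set of values used by the filling. -/
def valueSet (lam : List ℕ) (f : ℕ → ℕ → ℕ) : Finset ℕ :=
  (Finset.range lam.length).biUnion
    (fun i => (Finset.range (lam.getD i 0)).image (f i))

/-- The number of bars of a bar tableau: the number of distinct values used. -/
def barNum (lam : List ℕ) (f : ℕ → ℕ → ℕ) : ℕ := (valueSet lam f).card

/-- The srank of a strict partition: the minimum number of bars in a bar tableau. -/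
noncomputable def srank (lam : List ℕ) : ℕ :=
  sInf {k | ∃ f, IsBarTableau lam f ∧ barNum lam f = k}

/-- `ε(λ)`: the parity of the number of even parts of `λ`. -/
def epsP (l : List ℕ) : ℕ := (l.countP (fun x => decide (x % 2 = 0))) % 2

noncomputable def msMax (d : Multiset ℕ) : ℕ := d.toList.foldr max 0

/-- The factor `n_i` contributed by the removal of a bar turning the strict
partition `mu` into the strict partition `nu`; the three branches correspond to
bars of Type 2 (`i ∈ I₀`), Type 3 (`i ∈ I₋`) and Type 1 (`i ∈ I₊`). -/
noncomputable def barFactor (mu nu : List ℕ) : ℤ :=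
  let d : Multiset ℕ := (↑mu : Multiset ℕ) - ↑nu
  let a : Multiset ℕ := (↑nu : Multiset ℕ) - ↑mu
  if a = 0 then
    if Multiset.card d = 1 then
      (-1 : ℤ) ^ (mu.length - 1 - mu.idxOf d.sum)
    else
      (-1 : ℤ) ^ (mu.idxOf (d.sum - msMax d) - mu.idxOf (msMax d) + msMax d) *
        2 ^ (1 - epsP mu)
  else
    (-1 : ℤ) ^ (nu.idxOf a.sum - mu.idxOf d.sum) * 2 ^ (1 - epsP mu)

/-- The strict partition formed by the cells with values `≤ v` (nonzero row
lengths, reordered decreasingly). -/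
def subShape (lam : List ℕ) (f : ℕ → ℕ → ℕ) (v : ℕ) : List ℕ :=
  ((((List.range lam.length).map (fun i => partialCount lam f v i)).filter
      (fun c => decide (0 < c)) : Multiset ℕ).sort (· ≤ ·)).reverse

/-- The weight `wt(T)` of a bar tableau: the product of the factors `n_i`
associated with the successive removals of the bars, largest value first. -/
noncomputable def weight (lam : List ℕ) (f : ℕ → ℕ → ℕ) : ℤ :=
  let vals := (valueSet lam f).sort (· ≤ ·)
  (List.range vals.length).foldr
    (fun k acc =>
      barFactor (subShape lam f (vals.getD k 0))
        (subShape lam f (if k = 0 then 0 else vals.getD (k - 1) 0)) * acc) 1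

/-- Fillings vanishing outside the diagram (canonical representatives). -/
def Canonical (lam : List ℕ) (f : ℕ → ℕ → ℕ) : Prop :=
  ∀ i j, ¬ (i < lam.length ∧ j < lam.getD i 0) → f i j = 0

def EqOnShape (lam : List ℕ) (f g : ℕ → ℕ → ℕ) : Prop :=
  ∀ i j, i < lam.length → j < lam.getD i 0 → f i j = g i j

/-- The tableau has type `(s₁, s₂)`. -/
def HasType2 (lam : List ℕ) (f : ℕ → ℕ → ℕ) (s1 s2 : ℕ) : Prop :=
  cellCount lam f 1 = s1 ∧ cellCount lam f 2 = s2 ∧ ∀ v, 3 ≤ v → cellCount lam f v = 0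

/-- The tableau has type `(t)`. -/
def HasType1 (lam : List ℕ) (f : ℕ → ℕ → ℕ) (t : ℕ) : Prop :=
  cellCount lam f 1 = t ∧ ∀ v, 2 ≤ v → cellCount lam f v = 0

namespace SrankAux

open Finset

lemma max_step {a b a' b' : ℕ} (h1 : a' ≤ a + 1) (h2 : b' ≤ b + 1) :
    max a' b' ≤ max a b + 1 :=
  (max_le_max h1 h2).trans (le_of_eq (Nat.succ_max_succ a b))

/-- number of rows whose partial count is odd -/
def Ocnt (lam : List ℕ) (f : ℕ → ℕ → ℕ) (v : ℕ) : ℕ :=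
  ((Finset.range lam.length).filter (fun i => partialCount lam f v i % 2 = 1)).card

/-- number of rows whose partial count is nonzero and even -/
def Ecnt (lam : List ℕ) (f : ℕ → ℕ → ℕ) (v : ℕ) : ℕ :=
  ((Finset.range lam.length).filter
    (fun i => partialCount lam f v i ≠ 0 ∧ partialCount lam f v i % 2 = 0)).card

/-- number of rows whose partial count is nonzero -/
def Lcnt (lam : List ℕ) (f : ℕ → ℕ → ℕ) (v : ℕ) : ℕ :=
  ((Finset.range lam.length).filter (fun i => partialCount lam f v i ≠ 0)).card

lemma abstract_one (s : Finset ℕ) (g g' : ℕ → ℕ) (i0 : ℕ) (hi0 : i0 ∈ s)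
    (hout : ∀ i ∈ s, i ≠ i0 → g' i = g i)
    (hflip : g' i0 % 2 ≠ g i0 % 2) (hne : g' i0 ≠ 0) :
    max ((s.filter (fun i => g' i % 2 = 1)).card)
        ((s.filter (fun i => g' i ≠ 0 ∧ g' i % 2 = 0)).card +
          ((s.filter (fun i => g' i ≠ 0)).card) % 2) ≤
    max ((s.filter (fun i => g i % 2 = 1)).card)
        ((s.filter (fun i => g i ≠ 0 ∧ g i % 2 = 0)).card +
          ((s.filter (fun i => g i ≠ 0)).card) % 2) + 1 := by
  have hO : (s.filter (fun i => g' i % 2 = 1)).card ≤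
      (s.filter (fun i => g i % 2 = 1)).card + 1 := by
    have hsub : s.filter (fun i => g' i % 2 = 1) ⊆
        insert i0 (s.filter (fun i => g i % 2 = 1)) := by
      intro i hi
      simp only [mem_filter] at hi
      rcases eq_or_ne i i0 with rfl | hne'
      · exact mem_insert_self _ _
      · exact mem_insert_of_mem (mem_filter.2 ⟨hi.1, (hout i hi.1 hne') ▸ hi.2⟩)
    exact (card_le_card hsub).trans (card_insert_le _ _)
  by_cases hz : g i0 = 0
  · have hodd : g' i0 % 2 = 1 := by omega
    have hE : s.filter (fun i => g' i ≠ 0 ∧ g' i % 2 = 0) ⊆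
        s.filter (fun i => g i ≠ 0 ∧ g i % 2 = 0) := by
      intro i hi; simp only [mem_filter] at hi ⊢
      rcases eq_or_ne i i0 with rfl | hne'
      · omega
      · rw [hout i hi.1 hne'] at hi; exact hi
    have hL : s.filter (fun i => g' i ≠ 0) =
        insert i0 (s.filter (fun i => g i ≠ 0)) := by
      ext i
      simp only [mem_insert, mem_filter]
      constructor
      · rintro ⟨hi, hgi⟩
        rcases eq_or_ne i i0 with rfl | hne'
        · exact Or.inl rfl
        · exact Or.inr ⟨hi, (hout i hi hne') ▸ hgi⟩
      · rintro (rfl | ⟨hi, hgi⟩)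
        · exact ⟨hi0, hne⟩
        · refine ⟨hi, ?_⟩
          rcases eq_or_ne i i0 with rfl | hne'
          · exact hne
          · rw [hout i hi hne']; exact hgi
    apply max_step hO
    have h1 := card_le_card hE
    rw [hL, card_insert_of_notMem (by simp [hz])]
    omega
  · have hL : s.filter (fun i => g' i ≠ 0) = s.filter (fun i => g i ≠ 0) := by
      apply filter_congr
      intro i hi
      rcases eq_or_ne i i0 with rfl | hne'
      · simp [hne, hz]
      · rw [hout i hi hne']
    have hE : s.filter (fun i => g' i ≠ 0 ∧ g' i % 2 = 0) ⊆
        insert i0 (s.filter (fun i => g i ≠ 0 ∧ g i % 2 = 0)) := by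
      intro i hi; simp only [mem_filter] at hi
      rcases eq_or_ne i i0 with rfl | hne'
      · exact mem_insert_self _ _
      · refine mem_insert_of_mem (mem_filter.2 ⟨hi.1, ?_⟩)
        rw [← hout i hi.1 hne']; exact hi.2
    apply max_step hO
    have h1 := (card_le_card hE).trans (card_insert_le _ _)
    rw [hL]
    omega

lemma abstract_two' (s : Finset ℕ) (g g' : ℕ → ℕ) (i1 i2 : ℕ) (h12 : i1 ≠ i2)
    (hi1 : i1 ∈ s) (hi2 : i2 ∈ s)
    (hout : ∀ i ∈ s, i ≠ i1 → i ≠ i2 → g' i = g i)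
    (hz1 : g i1 = 0) (hz2 : g i2 = 0) (hn1 : g' i1 ≠ 0) (hn2 : g' i2 ≠ 0)
    (hp1 : g' i1 % 2 = 1) (hp2 : g' i2 % 2 = 0) :
    max ((s.filter (fun i => g' i % 2 = 1)).card)
        ((s.filter (fun i => g' i ≠ 0 ∧ g' i % 2 = 0)).card +
          ((s.filter (fun i => g' i ≠ 0)).card) % 2) ≤
    max ((s.filter (fun i => g i % 2 = 1)).card)
        ((s.filter (fun i => g i ≠ 0 ∧ g i % 2 = 0)).card +
          ((s.filter (fun i => g i ≠ 0)).card) % 2) + 1 := by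
  have hO : (s.filter (fun i => g' i % 2 = 1)).card ≤
      (s.filter (fun i => g i % 2 = 1)).card + 1 := by
    have hsub : s.filter (fun i => g' i % 2 = 1) ⊆
        insert i1 (s.filter (fun i => g i % 2 = 1)) := by
      intro i hi
      simp only [mem_filter] at hi
      rcases eq_or_ne i i1 with rfl | hne1
      · exact mem_insert_self _ _
      rcases eq_or_ne i i2 with rfl | hne2
      · omega
      · exact mem_insert_of_mem (mem_filter.2 ⟨hi.1, (hout i hi.1 hne1 hne2) ▸ hi.2⟩)
    exact (card_le_card hsub).trans (card_insert_le _ _)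
  have hE : (s.filter (fun i => g' i ≠ 0 ∧ g' i % 2 = 0)).card ≤
      (s.filter (fun i => g i ≠ 0 ∧ g i % 2 = 0)).card + 1 := by
    have hsub : s.filter (fun i => g' i ≠ 0 ∧ g' i % 2 = 0) ⊆
        insert i2 (s.filter (fun i => g i ≠ 0 ∧ g i % 2 = 0)) := by
      intro i hi
      simp only [mem_filter] at hi
      rcases eq_or_ne i i2 with rfl | hne2
      · exact mem_insert_self _ _
      rcases eq_or_ne i i1 with rfl | hne1
      · omega
      · refine mem_insert_of_mem (mem_filter.2 ⟨hi.1, ?_⟩)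
        rw [← hout i hi.1 hne1 hne2]; exact hi.2
    exact (card_le_card hsub).trans (card_insert_le _ _)
  have hL : s.filter (fun i => g' i ≠ 0) =
      insert i1 (insert i2 (s.filter (fun i => g i ≠ 0))) := by
    ext i
    simp only [mem_insert, mem_filter]
    constructor
    · rintro ⟨hi, hgi⟩
      rcases eq_or_ne i i1 with rfl | hne1
      · exact Or.inl rfl
      rcases eq_or_ne i i2 with rfl | hne2
      · exact Or.inr (Or.inl rfl)
      · exact Or.inr (Or.inr ⟨hi, (hout i hi hne1 hne2) ▸ hgi⟩)
    · rintro (rfl | rfl | ⟨hi, hgi⟩)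
      · exact ⟨hi1, hn1⟩
      · exact ⟨hi2, hn2⟩
      · refine ⟨hi, ?_⟩
        rcases eq_or_ne i i1 with rfl | hne1
        · exact hn1
        rcases eq_or_ne i i2 with rfl | hne2
        · exact hn2
        · rw [hout i hi hne1 hne2]; exact hgi
  apply max_step hO
  rw [hL, card_insert_of_notMem (by simp [h12, hz1]),
    card_insert_of_notMem (by simp [hz2])]
  omega

lemma abstract_two (s : Finset ℕ) (g g' : ℕ → ℕ) (i1 i2 : ℕ) (h12 : i1 ≠ i2)
    (hi1 : i1 ∈ s) (hi2 : i2 ∈ s)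
    (hout : ∀ i ∈ s, i ≠ i1 → i ≠ i2 → g' i = g i)
    (hz1 : g i1 = 0) (hz2 : g i2 = 0) (hn1 : g' i1 ≠ 0) (hn2 : g' i2 ≠ 0)
    (hodd : (g' i1 + g' i2) % 2 = 1) :
    max ((s.filter (fun i => g' i % 2 = 1)).card)
        ((s.filter (fun i => g' i ≠ 0 ∧ g' i % 2 = 0)).card +
          ((s.filter (fun i => g' i ≠ 0)).card) % 2) ≤
    max ((s.filter (fun i => g i % 2 = 1)).card)
        ((s.filter (fun i => g i ≠ 0 ∧ g i % 2 = 0)).card +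
          ((s.filter (fun i => g i ≠ 0)).card) % 2) + 1 := by
  have : (g' i1 % 2 = 1 ∧ g' i2 % 2 = 0) ∨ (g' i1 % 2 = 0 ∧ g' i2 % 2 = 1) := by
    omega
  rcases this with ⟨hp1, hp2⟩ | ⟨hp1, hp2⟩
  · exact abstract_two' s g g' i1 i2 h12 hi1 hi2 hout hz1 hz2 hn1 hn2 hp1 hp2
  · exact abstract_two' s g g' i2 i1 (Ne.symm h12) hi2 hi1
      (fun i hi h2 h1 => hout i hi h1 h2) hz2 hz1 hn2 hn1 hp2 hp1

lemma pc_succ (lam : List ℕ) (f : ℕ → ℕ → ℕ) (v i : ℕ) :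
    partialCount lam f (v + 1) i = partialCount lam f v i +
      ((Finset.range (lam.getD i 0)).filter (fun j => f i j = v + 1)).card := by
  unfold partialCount
  have hsplit : (Finset.range (lam.getD i 0)).filter (fun j => f i j ≤ v + 1) =
      (Finset.range (lam.getD i 0)).filter (fun j => f i j ≤ v) ∪
      (Finset.range (lam.getD i 0)).filter (fun j => f i j = v + 1) := by
    rw [← filter_or]
    exact filter_congr (fun j _ => by omega)
  rw [hsplit, card_union_of_disjoint]
  exact disjoint_left.mpr (by
    intro a ha hb
    simp only [mem_filter] at ha hb
    omega)

lemma mem_rowsOf (lam : List ℕ) (f : ℕ → ℕ → ℕ) (v i : ℕ) :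
    i ∈ rowsOf lam f v ↔ i < lam.length ∧
      ((Finset.range (lam.getD i 0)).filter (fun j => f i j = v)).card ≠ 0 := by
  rw [rowsOf, mem_filter, mem_range, Ne, card_eq_zero,
    ← ne_eq, ← nonempty_iff_ne_empty, filter_nonempty_iff]

lemma cellCount_eq_sum (lam : List ℕ) (f : ℕ → ℕ → ℕ) (v : ℕ) :
    cellCount lam f v = ∑ i ∈ rowsOf lam f v,
      ((Finset.range (lam.getD i 0)).filter (fun j => f i j = v)).card := by
  rw [cellCount]
  refine (Finset.sum_subset (filter_subset _ _) ?_).symm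
  intro i hi hni
  by_contra h
  exact hni ((mem_rowsOf lam f v i).mpr ⟨mem_range.mp hi, h⟩)

lemma value_mem (lam : List ℕ) (f : ℕ → ℕ → ℕ) {i j : ℕ}
    (hi : i < lam.length) (hj : j < lam.getD i 0) : f i j ∈ valueSet lam f := by
  rw [valueSet, mem_biUnion]
  exact ⟨i, mem_range.mpr hi, mem_image.mpr ⟨j, mem_range.mpr hj, rfl⟩⟩

lemma phi_le (lam : List ℕ) (f : ℕ → ℕ → ℕ) (hbt : IsBarTableau lam f) (v : ℕ) :
    max (Ocnt lam f v) (Ecnt lam f v + Lcnt lam f v % 2) ≤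
      ((valueSet lam f).filter (fun x => x ≤ v)).card := by
  obtain ⟨h1, h2, h3, h4, _⟩ := hbt
  induction v with
  | zero =>
    have hz : ∀ i ∈ Finset.range lam.length, partialCount lam f 0 i = 0 := by
      intro i hi
      rw [partialCount, card_eq_zero, filter_eq_empty_iff]
      intro j hj
      have := h1 i j (mem_range.mp hi) (mem_range.mp hj)
      omega
    have hO : Ocnt lam f 0 = 0 := by
      rw [Ocnt, card_eq_zero, filter_eq_empty_iff]
      intro i hi
      rw [hz i hi]
      omega
    have hE : Ecnt lam f 0 = 0 := by
      rw [Ecnt, card_eq_zero, filter_eq_empty_iff]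
      intro i hi
      rw [hz i hi]
      simp
    have hL : Lcnt lam f 0 = 0 := by
      rw [Lcnt, card_eq_zero, filter_eq_empty_iff]
      intro i hi
      rw [hz i hi]
      simp
    simp [hO, hE, hL]
  | succ v ih =>
    by_cases hw : (v + 1) ∈ valueSet lam f
    · -- the value v+1 is used
      have hins : (valueSet lam f).filter (fun x => x ≤ v + 1) =
          insert (v + 1) ((valueSet lam f).filter (fun x => x ≤ v)) := by
        ext x
        simp only [mem_filter, mem_insert]
        constructor
        · rintro ⟨hx, hxle⟩
          rcases eq_or_ne x (v + 1) with rfl | hne'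
          · exact Or.inl rfl
          · exact Or.inr ⟨hx, by omega⟩
        · rintro (rfl | ⟨hx, hxle⟩)
          · exact ⟨hw, le_refl _⟩
          · exact ⟨hx, by omega⟩
      rw [hins, card_insert_of_notMem (by simp)]
      have hstep : max (Ocnt lam f (v + 1)) (Ecnt lam f (v + 1) + Lcnt lam f (v + 1) % 2) ≤
          max (Ocnt lam f v) (Ecnt lam f v + Lcnt lam f v % 2) + 1 := by
        have hv1 : (1 : ℕ) ≤ v + 1 := by omega
        obtain ⟨hcard2, hstart⟩ := h4 (v + 1) hv1
        -- rowsOf is nonempty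
        obtain ⟨i, hi, j, hj, hfij⟩ : ∃ i, i < lam.length ∧ ∃ j, j < lam.getD i 0 ∧
            f i j = v + 1 := by
          rw [valueSet, mem_biUnion] at hw
          obtain ⟨i, hi, hx⟩ := hw
          rw [mem_image] at hx
          obtain ⟨j, hj, hfij⟩ := hx
          exact ⟨i, mem_range.mp hi, j, mem_range.mp hj, hfij⟩
        have hiR : i ∈ rowsOf lam f (v + 1) := by
          rw [mem_rowsOf]
          exact ⟨hi, card_ne_zero.mpr ⟨j, mem_filter.mpr ⟨mem_range.mpr hj, hfij⟩⟩⟩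
        have hcpos : 0 < (rowsOf lam f (v + 1)).card := card_pos.mpr ⟨i, hiR⟩
        have hRsub : rowsOf lam f (v + 1) ⊆ Finset.range lam.length := filter_subset _ _
        have hout : ∀ i' ∈ Finset.range lam.length, i' ∉ rowsOf lam f (v + 1) →
            partialCount lam f (v + 1) i' = partialCount lam f v i' := by
          intro i' hi' hni'
          rw [pc_succ]
          have : ((Finset.range (lam.getD i' 0)).filter (fun j => f i' j = v + 1)).card = 0 := by
            by_contra h
            exact hni' ((mem_rowsOf lam f (v + 1) i').mpr ⟨mem_range.mp hi', h⟩)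
          omega
        have hcc := cellCount_eq_sum lam f (v + 1)
        have hcases : (rowsOf lam f (v + 1)).card = 1 ∨ (rowsOf lam f (v + 1)).card = 2 := by
          omega
        rcases hcases with hc | hc
        · -- card = 1
          obtain ⟨i0, hR⟩ := card_eq_one.mp hc
          have hi0R : i0 ∈ rowsOf lam f (v + 1) := hR ▸ mem_singleton_self i0
          have hi0 : i0 ∈ Finset.range lam.length := hRsub hi0R
          have hrc : ((Finset.range (lam.getD i0 0)).filter (fun j => f i0 j = v + 1)).card ≠
              0 := ((mem_rowsOf lam f (v + 1) i0).mp hi0R).2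
          have hccv : cellCount lam f (v + 1) =
              ((Finset.range (lam.getD i0 0)).filter (fun j => f i0 j = v + 1)).card := by
            rw [hcc, hR, sum_singleton]
          have hoddc : cellCount lam f (v + 1) % 2 = 1 := by
            rcases h3 (v + 1) hv1 with h | h
            · omega
            · rw [Nat.odd_iff] at h; exact h
          have hpc0 := pc_succ lam f v i0
          rw [Ocnt, Ecnt, Lcnt, Ocnt, Ecnt, Lcnt]
          apply abstract_one (Finset.range lam.length) (fun i => partialCount lam f v i)
            (fun i => partialCount lam f (v + 1) i) i0 hi0
          · intro i' hi' hne'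
            exact hout i' hi' (by rw [hR]; simp [hne'])
          · omega
          · omega
        · -- card = 2
          obtain ⟨i1, i2, h12, hR⟩ := card_eq_two.mp hc
          have hi1R : i1 ∈ rowsOf lam f (v + 1) := by rw [hR]; simp
          have hi2R : i2 ∈ rowsOf lam f (v + 1) := by rw [hR]; simp
          have hi1 : i1 ∈ Finset.range lam.length := hRsub hi1R
          have hi2 : i2 ∈ Finset.range lam.length := hRsub hi2R
          have hpcv0 : ∀ i', i' ∈ rowsOf lam f (v + 1) → partialCount lam f v i' = 0 := by
            intro i' hi'R
            have hf0 : f i' 0 = v + 1 := hstart hc i' hi'R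
            rw [partialCount, card_eq_zero, filter_eq_empty_iff]
            intro j' hj'
            have hmono := h2 i' 0 j' (mem_range.mp (hRsub hi'R)) (Nat.zero_le _)
              (mem_range.mp hj')
            omega
          have hrc1 : ((Finset.range (lam.getD i1 0)).filter (fun j => f i1 j = v + 1)).card ≠
              0 := ((mem_rowsOf lam f (v + 1) i1).mp hi1R).2
          have hrc2 : ((Finset.range (lam.getD i2 0)).filter (fun j => f i2 j = v + 1)).card ≠
              0 := ((mem_rowsOf lam f (v + 1) i2).mp hi2R).2
          have hccv : cellCount lam f (v + 1) =
              ((Finset.range (lam.getD i1 0)).filter (fun j => f i1 j = v + 1)).card +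
              ((Finset.range (lam.getD i2 0)).filter (fun j => f i2 j = v + 1)).card := by
            rw [hcc, hR, sum_pair h12]
          have hoddc : cellCount lam f (v + 1) % 2 = 1 := by
            rcases h3 (v + 1) hv1 with h | h
            · omega
            · rw [Nat.odd_iff] at h; exact h
          have hpc1 := pc_succ lam f v i1
          have hpc2 := pc_succ lam f v i2
          have hz1 := hpcv0 i1 hi1R
          have hz2 := hpcv0 i2 hi2R
          rw [Ocnt, Ecnt, Lcnt, Ocnt, Ecnt, Lcnt]
          apply abstract_two (Finset.range lam.length) (fun i => partialCount lam f v i)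
            (fun i => partialCount lam f (v + 1) i) i1 i2 h12 hi1 hi2
          · intro i' hi' hne1 hne2
            exact hout i' hi' (by rw [hR]; simp [hne1, hne2])
          · exact hz1
          · exact hz2
          · omega
          · omega
          · omega
      exact hstep.trans (by omega)
    · -- the value v+1 is not used : nothing changes
      have hpc : ∀ i ∈ Finset.range lam.length,
          partialCount lam f (v + 1) i = partialCount lam f v i := by
        intro i hi
        rw [pc_succ]
        have : ((Finset.range (lam.getD i 0)).filter (fun j => f i j = v + 1)).card = 0 := by
          rw [card_eq_zero, filter_eq_empty_iff]
          intro j hj hfij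
          exact hw (hfij ▸ value_mem lam f (mem_range.mp hi) (mem_range.mp hj))
        omega
      have hO : Ocnt lam f (v + 1) = Ocnt lam f v := by
        rw [Ocnt, Ocnt]
        congr 1
        exact filter_congr (fun i hi => by rw [hpc i hi])
      have hE : Ecnt lam f (v + 1) = Ecnt lam f v := by
        rw [Ecnt, Ecnt]
        congr 1
        exact filter_congr (fun i hi => by rw [hpc i hi])
      have hL : Lcnt lam f (v + 1) = Lcnt lam f v := by
        rw [Lcnt, Lcnt]
        congr 1
        exact filter_congr (fun i hi => by rw [hpc i hi])
      have hfil : (valueSet lam f).filter (fun x => x ≤ v + 1) =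
          (valueSet lam f).filter (fun x => x ≤ v) := by
        apply filter_congr
        intro x hx
        have : x ≠ v + 1 := by rintro rfl; exact hw hx
        omega
      rw [hO, hE, hL, hfil]
      exact ih

lemma countP_eq_card (l : List ℕ) (p : ℕ → Prop) [DecidablePred p] :
    l.countP (fun x => decide (p x)) =
      ((Finset.range l.length).filter (fun i => p (l.getD i 0))).card := by
  induction l with
  | nil => simp
  | cons a l ih =>
    rw [List.countP_cons, Finset.card_filter, List.length_cons, Finset.sum_range_succ']
    simp only [List.getD_cons_succ, List.getD_cons_zero]
    rw [← Finset.card_filter, ih]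
    by_cases hpa : p a <;> simp [hpa]

end SrankAux

/-- Lower bound half of Clifford's srank formula: every bar tableau of shape a
strict partition `λ` with `o` odd and `e` even parts has at least `o` bars if
`o ≥ e`, and at least `e + (ℓ(λ) mod 2)` bars if `o < e`. -/
theorem srank_lower_bound (lam : List ℕ) (hstrict : lam.Chain' (· > ·))
    (hpos : ∀ x ∈ lam, 0 < x) :
    ((lam.countP (fun x => decide (x % 2 = 0)) ≤
        lam.countP (fun x => decide (x % 2 = 1)) →
      ∀ f, IsBarTableau lam f →
        lam.countP (fun x => decide (x % 2 = 1)) ≤ barNum lam f) ∧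
     (lam.countP (fun x => decide (x % 2 = 1)) <
        lam.countP (fun x => decide (x % 2 = 0)) →
      ∀ f, IsBarTableau lam f →
        lam.countP (fun x => decide (x % 2 = 0)) + lam.length % 2 ≤
          barNum lam f)) := by
  classical
  have key : ∀ f, IsBarTableau lam f →
      max (lam.countP (fun x => decide (x % 2 = 1)))
        (lam.countP (fun x => decide (x % 2 = 0)) + lam.length % 2) ≤ barNum lam f := by
    intro f hbt
    set V := (valueSet lam f).sup id with hV
    have hposidx : ∀ i, i < lam.length → 0 < lam.getD i 0 := by
      intro i hi
      rw [List.getD_eq_getElem lam 0 hi]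
      exact hpos _ (List.getElem_mem hi)
    have hpcV : ∀ i, i < lam.length → partialCount lam f V i = lam.getD i 0 := by
      intro i hi
      rw [partialCount, Finset.filter_true_of_mem, Finset.card_range]
      intro j hj
      exact Finset.le_sup (f := id) (SrankAux.value_mem lam f hi (Finset.mem_range.mp hj))
    have hfilter : (valueSet lam f).filter (fun x => x ≤ V) = valueSet lam f :=
      Finset.filter_true_of_mem (fun x hx => Finset.le_sup (f := id) hx)
    have h := SrankAux.phi_le lam f hbt V
    rw [hfilter] at h
    have hO : SrankAux.Ocnt lam f V = lam.countP (fun x => decide (x % 2 = 1)) := by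
      rw [SrankAux.countP_eq_card lam (fun x => x % 2 = 1), SrankAux.Ocnt]
      congr 1
      exact Finset.filter_congr (fun i hi => by
        rw [hpcV i (Finset.mem_range.mp hi)])
    have hE : SrankAux.Ecnt lam f V = lam.countP (fun x => decide (x % 2 = 0)) := by
      rw [SrankAux.countP_eq_card lam (fun x => x % 2 = 0), SrankAux.Ecnt]
      congr 1
      refine Finset.filter_congr (fun i hi => ?_)
      rw [hpcV i (Finset.mem_range.mp hi)]
      have := hposidx i (Finset.mem_range.mp hi)
      constructor
      · exact fun hh => hh.2
      · exact fun hh => ⟨by omega, hh⟩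
    have hL : SrankAux.Lcnt lam f V = lam.length := by
      rw [SrankAux.Lcnt, Finset.filter_true_of_mem, Finset.card_range]
      intro i hi
      rw [hpcV i (Finset.mem_range.mp hi)]
      have := hposidx i (Finset.mem_range.mp hi)
      omega
    rw [hO, hE, hL] at h
    exact h
  constructor
  · intro _ f hbt
    exact le_trans (le_max_left _ _) (key f hbt)
  · intro _ f hbt
    exact le_trans (le_max_right _ _) (key f hbt)
end

section
/- Let λ be a strict partition with o odd parts and e even parts, ℓ(λ) = o + e. Then there exists a bar tableau of shape λ with exactly max(o, e + (ℓ(λ) mod 2)) bars. (Upper bound half of Clifford's srank formula.) -/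
namespace SrankUB

/-- Cardinality of a step-function filter. -/
lemma step_card (n s a b v : ℕ) (hs : s ≤ n) :
    ((Finset.range n).filter (fun j => (if j < s then a else b) = v)).card =
      (if a = v then s else 0) + (if b = v then n - s else 0) := by
  by_cases ha : a = v <;> by_cases hb : b = v
  · have : (Finset.range n).filter (fun j => (if j < s then a else b) = v) = Finset.range n := by
      ext j; simp only [Finset.mem_filter, Finset.mem_range]
      constructor
      · tauto
      · intro h; refine ⟨h, ?_⟩; split <;> assumption
    rw [this]; simp [ha, hb]; omega
  · have : (Finset.range n).filter (fun j => (if j < s then a else b) = v) = Finset.range s := by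
      ext j; simp only [Finset.mem_filter, Finset.mem_range]
      constructor
      · rintro ⟨h1, h2⟩
        by_contra hj
        rw [if_neg (by omega)] at h2; exact hb h2
      · intro h; refine ⟨by omega, ?_⟩; rw [if_pos h]; exact ha
    rw [this]; simp [ha, hb]
  · have : (Finset.range n).filter (fun j => (if j < s then a else b) = v) = Finset.Ico s n := by
      ext j; simp only [Finset.mem_filter, Finset.mem_range, Finset.mem_Ico]
      constructor
      · rintro ⟨h1, h2⟩
        by_cases hj : j < s
        · rw [if_pos hj] at h2; exact absurd h2 ha
        · exact ⟨by omega, h1⟩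
      · rintro ⟨h1, h2⟩; exact ⟨h2, by rw [if_neg (by omega)]; exact hb⟩
    rw [this]; simp [ha, hb]
  · have : (Finset.range n).filter (fun j => (if j < s then a else b) = v) = ∅ := by
      ext j; simp only [Finset.mem_filter, Finset.mem_range, Finset.notMem_empty, iff_false]
      rintro ⟨h1, h2⟩
      by_cases hj : j < s
      · rw [if_pos hj] at h2; exact ha h2
      · rw [if_neg hj] at h2; exact hb h2
    rw [this]; simp [ha, hb]

/-- Cardinality of a step-function `≤` filter. -/
lemma step_card_le (n s a b v : ℕ) (hs : s ≤ n) (hab : a ≤ b) :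
    ((Finset.range n).filter (fun j => (if j < s then a else b) ≤ v)).card =
      if v < a then 0 else if v < b then s else n := by
  by_cases h1 : v < a
  · have : (Finset.range n).filter (fun j => (if j < s then a else b) ≤ v) = ∅ := by
      ext j; simp only [Finset.mem_filter, Finset.mem_range, Finset.notMem_empty, iff_false]
      rintro ⟨_, h2⟩
      split at h2 <;> omega
    rw [this]; simp [h1]
  · by_cases h2 : v < b
    · have : (Finset.range n).filter (fun j => (if j < s then a else b) ≤ v) = Finset.range s := by
        ext j; simp only [Finset.mem_filter, Finset.mem_range]
        constructor
        · rintro ⟨h3, h4⟩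
          by_contra hj
          rw [if_neg (by omega)] at h4; omega
        · intro h; exact ⟨by omega, by rw [if_pos h]; omega⟩
      rw [this]; simp [h1, h2]
    · have : (Finset.range n).filter (fun j => (if j < s then a else b) ≤ v) = Finset.range n := by
        ext j; simp only [Finset.mem_filter, Finset.mem_range]
        constructor
        · tauto
        · intro h; refine ⟨h, ?_⟩; split <;> omega
      rw [this]; simp [h1, h2]

def OL (lam : List ℕ) : List ℕ := (List.range lam.length).filter (fun i => lam.getD i 0 % 2 = 1)
def EL (lam : List ℕ) : List ℕ := (List.range lam.length).filter (fun i => lam.getD i 0 % 2 = 0)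
def oC (lam : List ℕ) : ℕ := (OL lam).length
def eC (lam : List ℕ) : ℕ := (EL lam).length
def qC (lam : List ℕ) : ℕ := min (oC lam) (eC lam)
def pC (lam : List ℕ) : ℕ := (eC lam - qC lam) / 2
def rC (lam : List ℕ) : ℕ := (eC lam - qC lam) % 2
def bC (lam : List ℕ) : ℕ := 2 * pC lam + 2 * rC lam

def Og (lam : List ℕ) (t : ℕ) : ℕ := (OL lam).getD t 0
def Eg (lam : List ℕ) (t : ℕ) : ℕ := (EL lam).getD t 0

def splitP (lam : List ℕ) (i : ℕ) : Prop :=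
  lam.getD i 0 % 2 = 0 ∧ qC lam ≤ (EL lam).idxOf i ∧ ((EL lam).idxOf i - qC lam) % 2 = 0

instance (lam : List ℕ) (i : ℕ) : Decidable (splitP lam i) := by unfold splitP; infer_instance

def rowA (lam : List ℕ) (i : ℕ) : ℕ :=
  if lam.getD i 0 % 2 = 1 then bC lam + (OL lam).idxOf i + 1
  else if (EL lam).idxOf i < qC lam then bC lam + (EL lam).idxOf i + 1
  else if (EL lam).idxOf i - qC lam = 2 * pC lam then 1
  else 2 * rC lam + 2 * (((EL lam).idxOf i - qC lam) / 2) + 1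

def rowB (lam : List ℕ) (i : ℕ) : ℕ := if splitP lam i then rowA lam i + 1 else rowA lam i

def rowS (lam : List ℕ) (i : ℕ) : ℕ :=
  if splitP lam i then
    (if (EL lam).idxOf i - qC lam = 2 * pC lam then 1
     else lam.getD ((EL lam).getD ((EL lam).idxOf i + 1) 0) 0 + 1)
  else lam.getD i 0

def ff (lam : List ℕ) (i j : ℕ) : ℕ := if j < rowS lam i then rowA lam i else rowB lam i


section Basic
variable {lam : List ℕ}

lemma mem_OL {i : ℕ} : i ∈ OL lam ↔ i < lam.length ∧ lam.getD i 0 % 2 = 1 := by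
  simp [OL, List.mem_filter, List.mem_range]

lemma mem_EL {i : ℕ} : i ∈ EL lam ↔ i < lam.length ∧ lam.getD i 0 % 2 = 0 := by
  simp [EL, List.mem_filter, List.mem_range]

lemma OL_pairwise : (OL lam).Pairwise (· < ·) :=
  List.Pairwise.filter _ (List.pairwise_lt_range)

lemma EL_pairwise : (EL lam).Pairwise (· < ·) :=
  List.Pairwise.filter _ (List.pairwise_lt_range)

lemma OL_nodup : (OL lam).Nodup := OL_pairwise.imp (fun h => Nat.ne_of_lt h)
lemma EL_nodup : (EL lam).Nodup := EL_pairwise.imp (fun h => Nat.ne_of_lt h)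

lemma Og_mem {t : ℕ} (ht : t < oC lam) : Og lam t ∈ OL lam := by
  rw [Og, List.getD_eq_getElem _ 0 ht]; exact List.getElem_mem ht

lemma Eg_mem {t : ℕ} (ht : t < eC lam) : Eg lam t ∈ EL lam := by
  rw [Eg, List.getD_eq_getElem _ 0 ht]; exact List.getElem_mem ht

lemma indexOf_Og {t : ℕ} (ht : t < oC lam) : (OL lam).idxOf (Og lam t) = t := by
  rw [Og, List.getD_eq_getElem _ 0 ht]; exact List.Nodup.idxOf_getElem OL_nodup t ht

lemma indexOf_Eg {t : ℕ} (ht : t < eC lam) : (EL lam).idxOf (Eg lam t) = t := by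
  rw [Eg, List.getD_eq_getElem _ 0 ht]; exact List.Nodup.idxOf_getElem EL_nodup t ht

lemma Og_indexOf {i : ℕ} (hi : i ∈ OL lam) : (OL lam).idxOf i < oC lam ∧ Og lam ((OL lam).idxOf i) = i := by
  have h : (OL lam).idxOf i < (OL lam).length := List.idxOf_lt_length_iff.2 hi
  refine ⟨h, ?_⟩
  rw [Og, List.getD_eq_getElem _ 0 h]
  exact List.idxOf_get h

lemma Eg_indexOf {i : ℕ} (hi : i ∈ EL lam) : (EL lam).idxOf i < eC lam ∧ Eg lam ((EL lam).idxOf i) = i := by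
  have h : (EL lam).idxOf i < (EL lam).length := List.idxOf_lt_length_iff.2 hi
  refine ⟨h, ?_⟩
  rw [Eg, List.getD_eq_getElem _ 0 h]
  exact List.idxOf_get h

lemma Og_lt_length {t : ℕ} (ht : t < oC lam) : Og lam t < lam.length := (mem_OL.1 (Og_mem ht)).1
lemma Eg_lt_length {t : ℕ} (ht : t < eC lam) : Eg lam t < lam.length := (mem_EL.1 (Eg_mem ht)).1
lemma Og_parity {t : ℕ} (ht : t < oC lam) : lam.getD (Og lam t) 0 % 2 = 1 := (mem_OL.1 (Og_mem ht)).2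
lemma Eg_parity {t : ℕ} (ht : t < eC lam) : lam.getD (Eg lam t) 0 % 2 = 0 := (mem_EL.1 (Eg_mem ht)).2

lemma Eg_strictMono {t t' : ℕ} (h : t < t') (ht' : t' < eC lam) : Eg lam t < Eg lam t' := by
  rw [Eg, Eg, List.getD_eq_getElem _ 0 (lt_trans h ht'), List.getD_eq_getElem _ 0 ht']
  exact List.pairwise_iff_getElem.1 EL_pairwise t t' (lt_trans h ht') ht' h

/-- `lam` is strictly decreasing on indices. -/
lemma lv_strict (hstrict : lam.Chain' (· > ·)) {i i' : ℕ} (h : i < i') (hi' : i' < lam.length) :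
    lam.getD i' 0 < lam.getD i 0 := by
  have hp : lam.Pairwise (· > ·) := List.isChain_iff_pairwise.1 hstrict
  rw [List.getD_eq_getElem _ 0 (lt_trans h hi'), List.getD_eq_getElem _ 0 hi']
  exact List.pairwise_iff_getElem.1 hp i i' (lt_trans h hi') hi' h

lemma lv_pos (hpos : ∀ x ∈ lam, 0 < x) {i : ℕ} (hi : i < lam.length) : 0 < lam.getD i 0 := by
  apply hpos
  rw [List.getD_eq_getElem _ 0 hi]
  exact List.getElem_mem hi

lemma countP_odd_eq : lam.countP (fun x => decide (x % 2 = 1)) = oC lam := by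
  have hmap : (List.range lam.length).map (fun i => lam.getD i 0) = lam := by
    apply List.ext_getElem
    · simp
    · intro n h1 h2; simp [List.getElem?_eq_getElem h2]
  conv_lhs => rw [← hmap]
  rw [List.countP_map, oC, OL, List.countP_eq_length_filter]
  rfl

lemma countP_even_eq : lam.countP (fun x => decide (x % 2 = 0)) = eC lam := by
  have hmap : (List.range lam.length).map (fun i => lam.getD i 0) = lam := by
    apply List.ext_getElem
    · simp
    · intro n h1 h2; simp [List.getElem?_eq_getElem h2]
  conv_lhs => rw [← hmap]
  rw [List.countP_map, eC, EL, List.countP_eq_length_filter]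
  rfl

lemma oC_add_eC : oC lam + eC lam = lam.length := by
  rw [← countP_odd_eq, ← countP_even_eq]
  have := List.length_eq_countP_add_countP (fun x => decide (x % 2 = 1)) (l := lam)
  rw [this]
  congr 1
  apply List.countP_congr
  intro x _
  simp only [decide_eq_true_eq]
  omega


lemma q_le_o : qC lam ≤ oC lam := min_le_left _ _
lemma q_le_e : qC lam ≤ eC lam := min_le_right _ _
lemma pr_def : eC lam - qC lam = 2 * pC lam + rC lam ∧ rC lam < 2 := by
  have h1 : pC lam = (eC lam - qC lam) / 2 := rfl
  have h2 : rC lam = (eC lam - qC lam) % 2 := rfl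
  omega

lemma not_split_of_odd {i : ℕ} (h : lam.getD i 0 % 2 = 1) : ¬ splitP lam i := by
  intro hs; have := hs.1; omega

lemma rowFacts_O {t : ℕ} (ht : t < oC lam) :
    rowA lam (Og lam t) = bC lam + t + 1 ∧ rowB lam (Og lam t) = rowA lam (Og lam t) ∧
      rowS lam (Og lam t) = lam.getD (Og lam t) 0 := by
  have hpar := Og_parity ht
  have hns := not_split_of_odd (lam := lam) (i := Og lam t) hpar
  refine ⟨?_, ?_, ?_⟩
  · rw [rowA, if_pos hpar, indexOf_Og ht]
  · rw [rowB, if_neg hns]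
  · rw [rowS, if_neg hns]

lemma rowFacts_Epaired {t : ℕ} (ht : t < qC lam) :
    rowA lam (Eg lam t) = bC lam + t + 1 ∧ rowB lam (Eg lam t) = rowA lam (Eg lam t) ∧
      rowS lam (Eg lam t) = lam.getD (Eg lam t) 0 := by
  have hte : t < eC lam := lt_of_lt_of_le ht q_le_e
  have hpar := Eg_parity hte
  have hidx := indexOf_Eg hte
  have hns : ¬ splitP lam (Eg lam t) := by
    intro hs; rw [splitP, hidx] at hs; omega
  refine ⟨?_, ?_, ?_⟩
  · rw [rowA, if_neg (by omega), hidx, if_pos ht]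
  · rw [rowB, if_neg hns]
  · rw [rowS, if_neg hns]

lemma rowFacts_Eshort {k : ℕ} (hk : k < pC lam) :
    rowA lam (Eg lam (qC lam + 2*k+1)) = 2 * rC lam + 2*k + 1 ∧
      rowB lam (Eg lam (qC lam + 2*k+1)) = rowA lam (Eg lam (qC lam + 2*k+1)) ∧
      rowS lam (Eg lam (qC lam + 2*k+1)) = lam.getD (Eg lam (qC lam + 2*k+1)) 0 := by
  have hpr := pr_def (lam := lam)
  have hte : qC lam + 2*k+1 < eC lam := by have := q_le_e (lam := lam); omega
  have hpar := Eg_parity hte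
  have hidx := indexOf_Eg hte
  have hns : ¬ splitP lam (Eg lam (qC lam + 2*k+1)) := by
    intro hs; rw [splitP, hidx] at hs; omega
  refine ⟨?_, ?_, ?_⟩
  · rw [rowA, if_neg (by omega), hidx, if_neg (by omega), if_neg (by omega)]
    congr 2
    omega
  · rw [rowB, if_neg hns]
  · rw [rowS, if_neg hns]

lemma rowFacts_Elong (hstrict : lam.Chain' (· > ·)) {k : ℕ} (hk : k < pC lam) :
    rowA lam (Eg lam (qC lam + 2*k)) = 2 * rC lam + 2*k + 1 ∧
      rowB lam (Eg lam (qC lam + 2*k)) = rowA lam (Eg lam (qC lam + 2*k)) + 1 ∧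
      rowS lam (Eg lam (qC lam + 2*k)) = lam.getD (Eg lam (qC lam + 2*k+1)) 0 + 1 ∧
      lam.getD (Eg lam (qC lam + 2*k+1)) 0 + 1 < lam.getD (Eg lam (qC lam + 2*k)) 0 ∧
      lam.getD (Eg lam (qC lam + 2*k+1)) 0 % 2 = 0 := by
  have hpr := pr_def (lam := lam)
  have hte : qC lam + 2*k < eC lam := by have := q_le_e (lam := lam); omega
  have hte' : qC lam + 2*k+1 < eC lam := by have := q_le_e (lam := lam); omega
  have hpar := Eg_parity hte
  have hpar' := Eg_parity hte'
  have hidx := indexOf_Eg hte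
  have hsp : splitP lam (Eg lam (qC lam + 2*k)) := by
    rw [splitP, hidx]; exact ⟨hpar, by omega, by omega⟩
  have hlt : lam.getD (Eg lam (qC lam + 2*k+1)) 0 < lam.getD (Eg lam (qC lam + 2*k)) 0 := by
    exact lv_strict hstrict (Eg_strictMono (by omega) hte') (Eg_lt_length hte')
  refine ⟨?_, ?_, ?_, by omega, hpar'⟩
  · rw [rowA, if_neg (by omega), hidx, if_neg (by omega), if_neg (by omega)]
    congr 2
    omega
  · rw [rowB, if_pos hsp]
  · rw [rowS, if_pos hsp, hidx, if_neg (by omega)]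
    rfl

lemma rowFacts_Esingle (hpos : ∀ x ∈ lam, 0 < x) (hr : rC lam = 1) :
    rowA lam (Eg lam (qC lam + 2*pC lam)) = 1 ∧
      rowB lam (Eg lam (qC lam + 2*pC lam)) = 2 ∧
      rowS lam (Eg lam (qC lam + 2*pC lam)) = 1 ∧
      2 ≤ lam.getD (Eg lam (qC lam + 2*pC lam)) 0 := by
  have hpr := pr_def (lam := lam)
  have hte : qC lam + 2*pC lam < eC lam := by have := q_le_e (lam := lam); omega
  have hpar := Eg_parity hte
  have hidx := indexOf_Eg hte
  have hsp : splitP lam (Eg lam (qC lam + 2*pC lam)) := by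
    rw [splitP, hidx]; exact ⟨hpar, by omega, by omega⟩
  have hlp : 0 < lam.getD (Eg lam (qC lam + 2*pC lam)) 0 := lv_pos hpos (Eg_lt_length hte)
  refine ⟨?_, ?_, ?_, by omega⟩
  · rw [rowA, if_neg (by omega), hidx, if_neg (by omega), if_pos (by omega)]
  · rw [rowB, if_pos hsp, rowA, if_neg (by omega), hidx, if_neg (by omega), if_pos (by omega)]
  · rw [rowS, if_pos hsp, hidx, if_pos (by omega)]

lemma classify {i : ℕ} (hi : i < lam.length) :
    (∃ t, t < oC lam ∧ i = Og lam t) ∨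
    (∃ t, t < qC lam ∧ i = Eg lam t) ∨
    (∃ k, k < pC lam ∧ i = Eg lam (qC lam + 2*k+1)) ∨
    (∃ k, k < pC lam ∧ i = Eg lam (qC lam + 2*k)) ∨
    (rC lam = 1 ∧ i = Eg lam (qC lam + 2*pC lam)) := by
  have hpr := pr_def (lam := lam)
  by_cases hpar : lam.getD i 0 % 2 = 1
  · left
    have hmem : i ∈ OL lam := mem_OL.2 ⟨hi, hpar⟩
    obtain ⟨h1, h2⟩ := Og_indexOf hmem
    exact ⟨_, h1, h2.symm⟩
  · have hmem : i ∈ EL lam := mem_EL.2 ⟨hi, by omega⟩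
    obtain ⟨h1, h2⟩ := Eg_indexOf hmem
    set t := (EL lam).idxOf i with htdef
    by_cases htq : t < qC lam
    · exact Or.inr (Or.inl ⟨t, htq, h2.symm⟩)
    · by_cases hu : (t - qC lam) % 2 = 1
      · refine Or.inr (Or.inr (Or.inl ⟨(t - qC lam)/2, by omega, ?_⟩))
        rw [← h2]; congr 1; omega
      · by_cases hu2 : t - qC lam = 2 * pC lam
        · refine Or.inr (Or.inr (Or.inr (Or.inr ⟨by omega, ?_⟩)))
          rw [← h2]; congr 1; omega
        · refine Or.inr (Or.inr (Or.inr (Or.inl ⟨(t - qC lam)/2, by omega, ?_⟩)))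
          rw [← h2]; congr 1; omega


lemma rowA_pos (i : ℕ) : 1 ≤ rowA lam i := by
  rw [rowA]; split_ifs <;> omega

lemma rowA_le_rowB (i : ℕ) : rowA lam i ≤ rowB lam i := by
  rw [rowB]; split_ifs <;> omega

lemma ff_mem (i j : ℕ) : ff lam i j = rowA lam i ∨ ff lam i j = rowB lam i := by
  rw [ff]; split_ifs <;> simp

/-- Inversion: which rows can carry value `v`. -/
lemma inv (hstrict : lam.Chain' (· > ·)) (hpos : ∀ x ∈ lam, 0 < x) {v i : ℕ}
    (hi : i < lam.length) (h : rowA lam i = v ∨ rowB lam i = v) :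
    (∃ t, t < oC lam ∧ v = bC lam + t + 1 ∧ i = Og lam t) ∨
    (∃ t, t < qC lam ∧ v = bC lam + t + 1 ∧ i = Eg lam t) ∨
    (∃ k, k < pC lam ∧ v = 2 * rC lam + 2*k + 1 ∧ i = Eg lam (qC lam + 2*k)) ∨
    (∃ k, k < pC lam ∧ v = 2 * rC lam + 2*k + 1 ∧ i = Eg lam (qC lam + 2*k+1)) ∨
    (∃ k, k < pC lam ∧ v = 2 * rC lam + 2*k + 2 ∧ i = Eg lam (qC lam + 2*k)) ∨
    (rC lam = 1 ∧ v = 1 ∧ i = Eg lam (qC lam + 2*pC lam)) ∨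
    (rC lam = 1 ∧ v = 2 ∧ i = Eg lam (qC lam + 2*pC lam)) := by
  rcases classify hi with ⟨t, ht, rfl⟩ | ⟨t, ht, rfl⟩ | ⟨k, hk, rfl⟩ | ⟨k, hk, rfl⟩ | ⟨hr, rfl⟩
  · obtain ⟨h1, h2, _⟩ := rowFacts_O ht
    left; exact ⟨t, ht, by omega, rfl⟩
  · obtain ⟨h1, h2, _⟩ := rowFacts_Epaired ht
    right; left; exact ⟨t, ht, by omega, rfl⟩
  · obtain ⟨h1, h2, _⟩ := rowFacts_Eshort hk
    right; right; right; left; exact ⟨k, hk, by omega, rfl⟩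
  · obtain ⟨h1, h2, _, _, _⟩ := rowFacts_Elong hstrict hk
    rcases h with h | h
    · right; right; left; exact ⟨k, hk, by omega, rfl⟩
    · right; right; right; right; left; exact ⟨k, hk, by omega, rfl⟩
  · obtain ⟨h1, h2, _, _⟩ := rowFacts_Esingle hpos hr
    rcases h with h | h
    · right; right; right; right; right; left; exact ⟨hr, by omega, rfl⟩
    · right; right; right; right; right; right; exact ⟨hr, by omega, rfl⟩

lemma rowS_bounds (hstrict : lam.Chain' (· > ·)) (hpos : ∀ x ∈ lam, 0 < x) {i : ℕ}
    (hi : i < lam.length) : 1 ≤ rowS lam i ∧ rowS lam i ≤ lam.getD i 0 := by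
  have hlp : 0 < lam.getD i 0 := lv_pos hpos hi
  rcases classify hi with ⟨t, ht, rfl⟩ | ⟨t, ht, rfl⟩ | ⟨k, hk, rfl⟩ | ⟨k, hk, rfl⟩ | ⟨hr, rfl⟩
  · obtain ⟨_, _, h3⟩ := rowFacts_O ht; omega
  · obtain ⟨_, _, h3⟩ := rowFacts_Epaired ht; omega
  · obtain ⟨_, _, h3⟩ := rowFacts_Eshort hk; omega
  · obtain ⟨_, _, h3, h4, _⟩ := rowFacts_Elong hstrict hk; omega
  · obtain ⟨_, _, h3, h4⟩ := rowFacts_Esingle hpos hr; omega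

lemma rowCount_eq (hstrict : lam.Chain' (· > ·)) (hpos : ∀ x ∈ lam, 0 < x) {i : ℕ}
    (hi : i < lam.length) (v : ℕ) :
    ((Finset.range (lam.getD i 0)).filter (fun j => ff lam i j = v)).card =
      (if rowA lam i = v then rowS lam i else 0) +
      (if rowB lam i = v then lam.getD i 0 - rowS lam i else 0) := by
  simp only [ff]
  exact step_card _ _ _ _ _ (rowS_bounds hstrict hpos hi).2

lemma partialCount_eq (hstrict : lam.Chain' (· > ·)) (hpos : ∀ x ∈ lam, 0 < x) {i : ℕ}
    (hi : i < lam.length) (v : ℕ) :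
    partialCount lam (ff lam) v i =
      if v < rowA lam i then 0 else if v < rowB lam i then rowS lam i else lam.getD i 0 := by
  rw [partialCount]
  simp only [ff]
  exact step_card_le _ _ _ _ _ (rowS_bounds hstrict hpos hi).2 (rowA_le_rowB i)

lemma sum_one {n : ℕ} (g : ℕ → ℕ) (x : ℕ) (hx : x < n)
    (h0 : ∀ i < n, i ≠ x → g i = 0) : ∑ i ∈ Finset.range n, g i = g x := by
  rw [← Finset.sum_subset (s₁ := {x}) (by simp [Finset.singleton_subset_iff, hx])]
  · simp
  · intro i hi hni
    simp only [Finset.mem_range] at hi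
    simp only [Finset.mem_singleton] at hni
    exact h0 i hi hni

lemma sum_two {n : ℕ} (g : ℕ → ℕ) (x y : ℕ) (hx : x < n) (hy : y < n) (hxy : x ≠ y)
    (h0 : ∀ i < n, i ≠ x → i ≠ y → g i = 0) : ∑ i ∈ Finset.range n, g i = g x + g y := by
  rw [← Finset.sum_subset (s₁ := {x, y}) (by
      intro i hi
      simp only [Finset.mem_insert, Finset.mem_singleton] at hi
      rcases hi with rfl | rfl <;> simp [hx, hy])]
  · rw [Finset.sum_pair hxy]
  · intro i hi hni
    simp only [Finset.mem_range] at hi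
    simp only [Finset.mem_insert, Finset.mem_singleton, not_or] at hni
    exact h0 i hi hni.1 hni.2


lemma Og_ne_Eg {t t' : ℕ} (ht : t < oC lam) (ht' : t' < eC lam) : Og lam t ≠ Eg lam t' := by
  intro h
  have h1 := Og_parity ht
  have h2 := Eg_parity ht'
  rw [h] at h1
  omega

lemma Eg_ne {t t' : ℕ} (h : t < t') (ht' : t' < eC lam) : Eg lam t ≠ Eg lam t' :=
  Nat.ne_of_lt (Eg_strictMono h ht')

lemma cell_cond (hstrict : lam.Chain' (· > ·)) (hpos : ∀ x ∈ lam, 0 < x) (v : ℕ) (hv : 1 ≤ v) :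
    cellCount lam (ff lam) v = 0 ∨ Odd (cellCount lam (ff lam) v) := by
  have hpr := pr_def (lam := lam)
  have hqo := q_le_o (lam := lam)
  have hqe := q_le_e (lam := lam)
  have hbCd : bC lam = 2 * pC lam + 2 * rC lam := rfl
  set g := fun i => ((Finset.range (lam.getD i 0)).filter (fun j => ff lam i j = v)).card with hg
  have hcc : cellCount lam (ff lam) v = ∑ i ∈ Finset.range lam.length, g i := rfl
  have hg0 : ∀ i, i < lam.length → rowA lam i ≠ v → rowB lam i ≠ v → g i = 0 := by
    intro i hi h1 h2
    rw [hg]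
    simp only [rowCount_eq hstrict hpos hi v, if_neg h1, if_neg h2]
  have hinv : ∀ i, i < lam.length → g i ≠ 0 → rowA lam i = v ∨ rowB lam i = v := by
    intro i hi hgi
    by_contra hc
    push_neg at hc
    exact hgi (hg0 i hi hc.1 hc.2)
  rw [hcc]
  by_cases hbig : bC lam + oC lam < v
  · left
    apply Finset.sum_eq_zero
    intro i hi
    simp only [Finset.mem_range] at hi
    by_contra hgi
    rcases inv hstrict hpos hi (hinv i hi hgi) with
      ⟨t, ht, hveq, _⟩ | ⟨t, ht, hveq, _⟩ | ⟨k, hk, hveq, _⟩ | ⟨k, hk, hveq, _⟩ |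
      ⟨k, hk, hveq, _⟩ | ⟨hr, hveq, _⟩ | ⟨hr, hveq, _⟩ <;> omega
  · push_neg at hbig
    by_cases hv1 : bC lam < v
    · -- v = bC + t + 1, paired value
      set t := v - bC lam - 1 with htdef
      have ht : t < oC lam := by omega
      have hveq : v = bC lam + t + 1 := by omega
      obtain ⟨ha, hb, hs⟩ := rowFacts_O ht
      have hparO := Og_parity ht
      have hOl := Og_lt_length ht
      by_cases htq : t < qC lam
      · obtain ⟨ha', hb', hs'⟩ := rowFacts_Epaired htq
        have hparE := Eg_parity (lt_of_lt_of_le htq hqe)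
        have hEl := Eg_lt_length (lt_of_lt_of_le htq hqe)
        have hsum : ∑ i ∈ Finset.range lam.length, g i = g (Og lam t) + g (Eg lam t) := by
          apply sum_two g _ _ hOl hEl (Og_ne_Eg ht (lt_of_lt_of_le htq hqe))
          intro i hi hne1 hne2
          by_contra hgi
          rcases inv hstrict hpos hi (hinv i hi hgi) with
            ⟨t', ht', hveq', hieq⟩ | ⟨t', ht', hveq', hieq⟩ | ⟨k, hk, hveq', _⟩ |
            ⟨k, hk, hveq', _⟩ | ⟨k, hk, hveq', _⟩ | ⟨hr, hveq', _⟩ | ⟨hr, hveq', _⟩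
          · exact hne1 (by rw [hieq]; congr 1; omega)
          · exact hne2 (by rw [hieq]; congr 1; omega)
          all_goals omega
        rw [hsum, hg]
        simp only [rowCount_eq hstrict hpos hOl v, rowCount_eq hstrict hpos hEl v,
          ha, hb, ha', hb', hs, hs', if_pos (hveq.symm), if_pos]
        right
        rw [Nat.odd_iff]
        omega
      · have hsum : ∑ i ∈ Finset.range lam.length, g i = g (Og lam t) := by
          apply sum_one g _ hOl
          intro i hi hne1
          by_contra hgi
          rcases inv hstrict hpos hi (hinv i hi hgi) with
            ⟨t', ht', hveq', hieq⟩ | ⟨t', ht', hveq', hieq⟩ | ⟨k, hk, hveq', _⟩ |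
            ⟨k, hk, hveq', _⟩ | ⟨k, hk, hveq', _⟩ | ⟨hr, hveq', _⟩ | ⟨hr, hveq', _⟩
          · exact hne1 (by rw [hieq]; congr 1; omega)
          all_goals omega
        rw [hsum, hg]
        simp only [rowCount_eq hstrict hpos hOl v, ha, hb, hs, if_pos (hveq.symm)]
        right
        rw [Nat.odd_iff]
        omega
    · by_cases hv2 : 2 * rC lam < v
      · -- pair values
        set u := v - 2 * rC lam with hudef
        by_cases hu : u % 2 = 1
        · -- v = 2r + 2k + 1
          set k := (u - 1) / 2 with hkdef
          have hk : k < pC lam := by omega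
          have hveq : v = 2 * rC lam + 2 * k + 1 := by omega
          obtain ⟨ha, hb, hs, hlt, hpar'⟩ := rowFacts_Elong hstrict hk
          obtain ⟨ha', hb', hs'⟩ := rowFacts_Eshort hk
          have hteL : qC lam + 2*k < eC lam := by omega
          have hteS : qC lam + 2*k+1 < eC lam := by omega
          have hLl := Eg_lt_length hteL
          have hSl := Eg_lt_length hteS
          have hsum : ∑ i ∈ Finset.range lam.length, g i =
              g (Eg lam (qC lam + 2*k)) + g (Eg lam (qC lam + 2*k+1)) := by
            apply sum_two g _ _ hLl hSl (Eg_ne (by omega) hteS)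
            intro i hi hne1 hne2
            by_contra hgi
            rcases inv hstrict hpos hi (hinv i hi hgi) with
              ⟨t', ht', hveq', hieq⟩ | ⟨t', ht', hveq', hieq⟩ | ⟨k', hk', hveq', hieq⟩ |
              ⟨k', hk', hveq', hieq⟩ | ⟨k', hk', hveq', _⟩ | ⟨hr, hveq', _⟩ | ⟨hr, hveq', _⟩
            · omega
            · omega
            · exact hne1 (by rw [hieq]; congr 2; omega)
            · exact hne2 (by rw [hieq]; congr 2; omega)
            all_goals omega
          rw [hsum, hg]
          simp only [rowCount_eq hstrict hpos hLl v, rowCount_eq hstrict hpos hSl v,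
            ha, hb, ha', hb', hs, hs', if_pos (hveq.symm), if_neg (by omega : ¬ (2 * rC lam + 2*k + 1) + 1 = v)]
          right
          rw [Nat.odd_iff]
          have hparL := Eg_parity hteL
          omega
        · -- v = 2r + 2k + 2
          set k := (u - 2) / 2 with hkdef
          have hk : k < pC lam := by omega
          have hveq : v = 2 * rC lam + 2 * k + 2 := by omega
          obtain ⟨ha, hb, hs, hlt, hpar'⟩ := rowFacts_Elong hstrict hk
          have hteL : qC lam + 2*k < eC lam := by omega
          have hLl := Eg_lt_length hteL
          have hsum : ∑ i ∈ Finset.range lam.length, g i = g (Eg lam (qC lam + 2*k)) := by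
            apply sum_one g _ hLl
            intro i hi hne1
            by_contra hgi
            rcases inv hstrict hpos hi (hinv i hi hgi) with
              ⟨t', ht', hveq', hieq⟩ | ⟨t', ht', hveq', hieq⟩ | ⟨k', hk', hveq', hieq⟩ |
              ⟨k', hk', hveq', hieq⟩ | ⟨k', hk', hveq', hieq⟩ | ⟨hr, hveq', _⟩ | ⟨hr, hveq', _⟩
            · omega
            · omega
            · omega
            · omega
            · exact hne1 (by rw [hieq]; congr 2; omega)
            all_goals omega
          rw [hsum, hg]
          simp only [rowCount_eq hstrict hpos hLl v, ha, hb, hs,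
            if_neg (by omega : ¬ 2 * rC lam + 2*k + 1 = v), if_pos (by omega : (2 * rC lam + 2*k + 1) + 1 = v)]
          right
          rw [Nat.odd_iff]
          have hparL := Eg_parity hteL
          omega
      · -- v ≤ 2r, so r = 1 and v ∈ {1, 2}
        have hr : rC lam = 1 := by omega
        obtain ⟨ha, hb, hs, hlam2⟩ := rowFacts_Esingle hpos hr
        have hte : qC lam + 2*pC lam < eC lam := by omega
        have hXl := Eg_lt_length hte
        have hsum : ∑ i ∈ Finset.range lam.length, g i = g (Eg lam (qC lam + 2*pC lam)) := by
          apply sum_one g _ hXl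
          intro i hi hne1
          by_contra hgi
          rcases inv hstrict hpos hi (hinv i hi hgi) with
            ⟨t', ht', hveq', hieq⟩ | ⟨t', ht', hveq', hieq⟩ | ⟨k', hk', hveq', hieq⟩ |
            ⟨k', hk', hveq', hieq⟩ | ⟨k', hk', hveq', hieq⟩ | ⟨_, hveq', hieq⟩ | ⟨_, hveq', hieq⟩
          · omega
          · omega
          · omega
          · omega
          · omega
          · exact hne1 hieq
          · exact hne1 hieq
        rw [hsum, hg]
        have hparX := Eg_parity hte
        rcases (by omega : v = 1 ∨ v = 2) with rfl | rfl
        · simp only [rowCount_eq hstrict hpos hXl 1, ha, hb, hs, if_pos rfl,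
            if_neg (by omega : ¬ (2:ℕ) = 1)]
          right
          rw [Nat.odd_iff]
          simp
        · simp only [rowCount_eq hstrict hpos hXl 2, ha, hb, hs,
            if_neg (by omega : ¬ (1:ℕ) = 2), if_pos rfl]
          right
          rw [Nat.odd_iff]
          simp only [if_true]
          omega


lemma ff_zero (hstrict : lam.Chain' (· > ·)) (hpos : ∀ x ∈ lam, 0 < x) {i : ℕ}
    (hi : i < lam.length) : ff lam i 0 = rowA lam i := by
  rw [ff, if_pos]
  exact lt_of_lt_of_le Nat.zero_lt_one (rowS_bounds hstrict hpos hi).1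

lemma mem_rowsOf {v i : ℕ} (h : i ∈ rowsOf lam (ff lam) v) :
    i < lam.length ∧ (rowA lam i = v ∨ rowB lam i = v) := by
  rw [rowsOf, Finset.mem_filter, Finset.mem_range] at h
  obtain ⟨h1, j, _, h3⟩ := h
  exact ⟨h1, by rcases ff_mem (lam := lam) i j with h4 | h4 <;> rw [h4] at h3 <;> tauto⟩

lemma card_le_two_of_subset_pair {s : Finset ℕ} {x y : ℕ} (h : s ⊆ {x, y}) : s.card ≤ 2 :=
  le_trans (Finset.card_le_card h) (le_trans (Finset.card_insert_le _ _) (by simp))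

lemma rows_cond (hstrict : lam.Chain' (· > ·)) (hpos : ∀ x ∈ lam, 0 < x) (v : ℕ) (hv : 1 ≤ v) :
    (rowsOf lam (ff lam) v).card ≤ 2 ∧
      ((rowsOf lam (ff lam) v).card = 2 → ∀ i ∈ rowsOf lam (ff lam) v, ff lam i 0 = v) := by
  have hpr := pr_def (lam := lam)
  have hqo := q_le_o (lam := lam)
  have hqe := q_le_e (lam := lam)
  have hbCd : bC lam = 2 * pC lam + 2 * rC lam := rfl
  by_cases hbig : bC lam + oC lam < v
  · have hsub : rowsOf lam (ff lam) v ⊆ ∅ := by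
      intro i hi
      obtain ⟨h1, h2⟩ := mem_rowsOf hi
      exfalso
      rcases inv hstrict hpos h1 h2 with
        ⟨t, ht, hveq, _⟩ | ⟨t, ht, hveq, _⟩ | ⟨k, hk, hveq, _⟩ | ⟨k, hk, hveq, _⟩ |
        ⟨k, hk, hveq, _⟩ | ⟨hr, hveq, _⟩ | ⟨hr, hveq, _⟩ <;> omega
    have := Finset.card_le_card hsub
    simp only [Finset.card_empty] at this
    constructor
    · omega
    · intro h2; omega
  · push_neg at hbig
    by_cases hv1 : bC lam < v
    · set t := v - bC lam - 1 with htdef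
      have ht : t < oC lam := by omega
      have hveq : v = bC lam + t + 1 := by omega
      by_cases htq : t < qC lam
      · -- two rows, both start with v
        have hsub : rowsOf lam (ff lam) v ⊆ {Og lam t, Eg lam t} := by
          intro i hi
          obtain ⟨h1, h2⟩ := mem_rowsOf hi
          simp only [Finset.mem_insert, Finset.mem_singleton]
          rcases inv hstrict hpos h1 h2 with
            ⟨t', ht', hveq', hieq⟩ | ⟨t', ht', hveq', hieq⟩ | ⟨k, hk, hveq', _⟩ |
            ⟨k, hk, hveq', _⟩ | ⟨k, hk, hveq', _⟩ | ⟨hr, hveq', _⟩ | ⟨hr, hveq', _⟩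
          · left; rw [hieq]; congr 1; omega
          · right; rw [hieq]; congr 1; omega
          all_goals omega
        refine ⟨card_le_two_of_subset_pair hsub, ?_⟩
        intro _ i hi
        obtain ⟨h1, _⟩ := mem_rowsOf hi
        have := hsub hi
        simp only [Finset.mem_insert, Finset.mem_singleton] at this
        rw [ff_zero hstrict hpos h1]
        rcases this with rfl | rfl
        · rw [(rowFacts_O ht).1]; omega
        · rw [(rowFacts_Epaired htq).1]; omega
      · have hsub : rowsOf lam (ff lam) v ⊆ {Og lam t} := by
          intro i hi
          obtain ⟨h1, h2⟩ := mem_rowsOf hi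
          simp only [Finset.mem_singleton]
          rcases inv hstrict hpos h1 h2 with
            ⟨t', ht', hveq', hieq⟩ | ⟨t', ht', hveq', hieq⟩ | ⟨k, hk, hveq', _⟩ |
            ⟨k, hk, hveq', _⟩ | ⟨k, hk, hveq', _⟩ | ⟨hr, hveq', _⟩ | ⟨hr, hveq', _⟩
          · rw [hieq]; congr 1; omega
          all_goals omega
        have h2 := Finset.card_le_card hsub
        simp only [Finset.card_singleton] at h2
        exact ⟨by omega, by intro h3; omega⟩
    · by_cases hv2 : 2 * rC lam < v
      · set u := v - 2 * rC lam with hudef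
        by_cases hu : u % 2 = 1
        · set k := (u - 1) / 2 with hkdef
          have hk : k < pC lam := by omega
          have hveq : v = 2 * rC lam + 2 * k + 1 := by omega
          have hsub : rowsOf lam (ff lam) v ⊆ {Eg lam (qC lam + 2*k), Eg lam (qC lam + 2*k+1)} := by
            intro i hi
            obtain ⟨h1, h2⟩ := mem_rowsOf hi
            simp only [Finset.mem_insert, Finset.mem_singleton]
            rcases inv hstrict hpos h1 h2 with
              ⟨t', ht', hveq', hieq⟩ | ⟨t', ht', hveq', hieq⟩ | ⟨k', hk', hveq', hieq⟩ |
              ⟨k', hk', hveq', hieq⟩ | ⟨k', hk', hveq', hieq⟩ | ⟨hr, hveq', _⟩ | ⟨hr, hveq', _⟩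
            · omega
            · omega
            · left; rw [hieq]; congr 2; omega
            · right; rw [hieq]; congr 2; omega
            all_goals omega
          refine ⟨card_le_two_of_subset_pair hsub, ?_⟩
          intro _ i hi
          obtain ⟨h1, _⟩ := mem_rowsOf hi
          have := hsub hi
          simp only [Finset.mem_insert, Finset.mem_singleton] at this
          rw [ff_zero hstrict hpos h1]
          rcases this with rfl | rfl
          · rw [(rowFacts_Elong hstrict hk).1]; omega
          · rw [(rowFacts_Eshort hk).1]; omega
        · set k := (u - 2) / 2 with hkdef
          have hk : k < pC lam := by omega
          have hveq : v = 2 * rC lam + 2 * k + 2 := by omega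
          have hsub : rowsOf lam (ff lam) v ⊆ {Eg lam (qC lam + 2*k)} := by
            intro i hi
            obtain ⟨h1, h2⟩ := mem_rowsOf hi
            simp only [Finset.mem_singleton]
            rcases inv hstrict hpos h1 h2 with
              ⟨t', ht', hveq', hieq⟩ | ⟨t', ht', hveq', hieq⟩ | ⟨k', hk', hveq', hieq⟩ |
              ⟨k', hk', hveq', hieq⟩ | ⟨k', hk', hveq', hieq⟩ | ⟨hr, hveq', _⟩ | ⟨hr, hveq', _⟩
            · omega
            · omega
            · omega
            · omega
            · rw [hieq]; congr 2; omega
            all_goals omega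
          have h2 := Finset.card_le_card hsub
          simp only [Finset.card_singleton] at h2
          exact ⟨by omega, by intro h3; omega⟩
      · have hr : rC lam = 1 := by omega
        have hsub : rowsOf lam (ff lam) v ⊆ {Eg lam (qC lam + 2*pC lam)} := by
          intro i hi
          obtain ⟨h1, h2⟩ := mem_rowsOf hi
          simp only [Finset.mem_singleton]
          rcases inv hstrict hpos h1 h2 with
            ⟨t', ht', hveq', hieq⟩ | ⟨t', ht', hveq', hieq⟩ | ⟨k', hk', hveq', hieq⟩ |
            ⟨k', hk', hveq', hieq⟩ | ⟨k', hk', hveq', hieq⟩ | ⟨_, hveq', hieq⟩ | ⟨_, hveq', hieq⟩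
          · omega
          · omega
          · omega
          · omega
          · omega
          · exact hieq
          · exact hieq
        have h2 := Finset.card_le_card hsub
        simp only [Finset.card_singleton] at h2
        exact ⟨by omega, by intro h3; omega⟩


lemma split_char (hstrict : lam.Chain' (· > ·)) (hpos : ∀ x ∈ lam, 0 < x) {i : ℕ}
    (hi : i < lam.length) (hne : rowA lam i ≠ rowB lam i) :
    (∃ k, k < pC lam ∧ i = Eg lam (qC lam + 2*k) ∧ rowA lam i = 2 * rC lam + 2*k + 1 ∧
      rowB lam i = rowA lam i + 1 ∧ rowS lam i = lam.getD (Eg lam (qC lam + 2*k+1)) 0 + 1 ∧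
      lam.getD (Eg lam (qC lam + 2*k+1)) 0 % 2 = 0 ∧ rowS lam i < lam.getD i 0) ∨
    (rC lam = 1 ∧ i = Eg lam (qC lam + 2*pC lam) ∧ rowA lam i = 1 ∧ rowB lam i = 2 ∧
      rowS lam i = 1) := by
  rcases classify hi with ⟨t, ht, rfl⟩ | ⟨t, ht, rfl⟩ | ⟨k, hk, rfl⟩ | ⟨k, hk, rfl⟩ | ⟨hr, rfl⟩
  · exact absurd (rowFacts_O ht).2.1.symm hne
  · exact absurd (rowFacts_Epaired ht).2.1.symm hne
  · exact absurd (rowFacts_Eshort hk).2.1.symm hne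
  · obtain ⟨h1, h2, h3, h4, h5⟩ := rowFacts_Elong hstrict hk
    exact Or.inl ⟨k, hk, rfl, h1, h2, h3, h5, by omega⟩
  · obtain ⟨h1, h2, h3, _⟩ := rowFacts_Esingle hpos hr
    exact Or.inr ⟨hr, rfl, h1, h2, h3⟩

lemma odd_row_char (hi : i < lam.length) (hodd : lam.getD i 0 % 2 = 1) :
    ∃ t, t < oC lam ∧ i = Og lam t ∧ rowB lam i = bC lam + t + 1 := by
  have hpr := pr_def (lam := lam)
  have hqe := q_le_e (lam := lam)
  rcases classify hi with ⟨t, ht, rfl⟩ | ⟨t, ht, rfl⟩ | ⟨k, hk, rfl⟩ | ⟨k, hk, rfl⟩ | ⟨hr, rfl⟩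
  · obtain ⟨h1, h2, _⟩ := rowFacts_O ht
    exact ⟨t, ht, rfl, by omega⟩
  · have := Eg_parity (lt_of_lt_of_le ht hqe); omega
  · have := Eg_parity (show qC lam + 2*k+1 < eC lam by omega); omega
  · have := Eg_parity (show qC lam + 2*k < eC lam by omega); omega
  · have := Eg_parity (show qC lam + 2*pC lam < eC lam by omega); omega

lemma rowB_lb (hstrict : lam.Chain' (· > ·)) (hpos : ∀ x ∈ lam, 0 < x) {i : ℕ}
    (hi : i < lam.length) :
    2 * rC lam + 1 ≤ rowB lam i ∨
      (rC lam = 1 ∧ i = Eg lam (qC lam + 2*pC lam) ∧ rowB lam i = 2) := by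
  have hbCd : bC lam = 2 * pC lam + 2 * rC lam := rfl
  rcases classify hi with ⟨t, ht, rfl⟩ | ⟨t, ht, rfl⟩ | ⟨k, hk, rfl⟩ | ⟨k, hk, rfl⟩ | ⟨hr, rfl⟩
  · obtain ⟨h1, h2, _⟩ := rowFacts_O ht; omega
  · obtain ⟨h1, h2, _⟩ := rowFacts_Epaired ht; omega
  · obtain ⟨h1, h2, _⟩ := rowFacts_Eshort hk; omega
  · obtain ⟨h1, h2, _, _, _⟩ := rowFacts_Elong hstrict hk; omega
  · obtain ⟨h1, h2, _, _⟩ := rowFacts_Esingle hpos hr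
    exact Or.inr ⟨hr, rfl, h2⟩

lemma partial_cond (hstrict : lam.Chain' (· > ·)) (hpos : ∀ x ∈ lam, 0 < x) :
    ∀ v i i', 1 ≤ v → i < i' → i' < lam.length →
      partialCount lam (ff lam) v i ≠ 0 → partialCount lam (ff lam) v i' ≠ 0 →
      partialCount lam (ff lam) v i ≠ partialCount lam (ff lam) v i' := by
  intro v i i' hv hii' hi' hne0 hne0' heq
  have hpr := pr_def (lam := lam)
  have hqo := q_le_o (lam := lam)
  have hbCd : bC lam = 2 * pC lam + 2 * rC lam := rfl
  have hi : i < lam.length := lt_trans hii' hi'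
  rw [partialCount_eq hstrict hpos hi v] at hne0 heq
  rw [partialCount_eq hstrict hpos hi' v] at hne0' heq
  by_cases c1 : v < rowA lam i
  · rw [if_pos c1] at hne0; exact hne0 rfl
  by_cases c1' : v < rowA lam i'
  · rw [if_pos c1'] at hne0'; exact hne0' rfl
  rw [if_neg c1] at heq
  rw [if_neg c1'] at heq
  by_cases c2 : v < rowB lam i <;> by_cases c2' : v < rowB lam i'
  · -- both middle: both split rows
    rw [if_pos c2, if_pos c2'] at heq
    have hsp := split_char hstrict hpos hi (by omega)
    have hsp' := split_char hstrict hpos hi' (by omega)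
    rcases hsp with ⟨k, hk, hieq, ha, hb, _, _, _⟩ | ⟨hr, hieq, ha, hb, _⟩ <;>
      rcases hsp' with ⟨k', hk', hieq', ha', hb', _, _, _⟩ | ⟨hr', hieq', ha', hb', _⟩
    · have hkk : k = k' := by omega
      rw [hieq, hieq', hkk] at hii'
      omega
    · omega
    · omega
    · rw [hieq, hieq'] at hii'
      omega
  · -- i middle (split), i' full
    rw [if_pos c2, if_neg c2'] at heq
    have hsp := split_char hstrict hpos hi (by omega)
    rcases hsp with ⟨k, hk, hieq, ha, hb, hs, hpar, _⟩ | ⟨hr, hieq, ha, hb, hs⟩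
    · -- λ i' odd
      have hodd : lam.getD i' 0 % 2 = 1 := by omega
      obtain ⟨t, ht, _, hbB⟩ := odd_row_char hi' hodd
      omega
    · rcases rowB_lb hstrict hpos hi' with h | ⟨_, hieq', _⟩
      · omega
      · rw [hieq, hieq'] at hii'; omega
  · -- i full, i' middle (split)
    rw [if_neg c2, if_pos c2'] at heq
    have hsp := split_char hstrict hpos hi' (by omega)
    rcases hsp with ⟨k, hk, hieq', ha', hb', hs', hpar', _⟩ | ⟨hr, hieq', ha', hb', hs'⟩
    · have hodd : lam.getD i 0 % 2 = 1 := by omega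
      obtain ⟨t, ht, _, hbB⟩ := odd_row_char hi hodd
      omega
    · rcases rowB_lb hstrict hpos hi with h | ⟨_, hieq, _⟩
      · omega
      · rw [hieq, hieq'] at hii'; omega
  · rw [if_neg c2, if_neg c2'] at heq
    have := lv_strict hstrict hii' hi'
    omega


lemma valueSet_eq (hstrict : lam.Chain' (· > ·)) (hpos : ∀ x ∈ lam, 0 < x) :
    valueSet lam (ff lam) = Finset.Icc 1 (bC lam + oC lam) := by
  have hpr := pr_def (lam := lam)
  have hqo := q_le_o (lam := lam)
  have hqe := q_le_e (lam := lam)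
  have hbCd : bC lam = 2 * pC lam + 2 * rC lam := rfl
  apply Finset.Subset.antisymm
  · intro v hv
    rw [valueSet, Finset.mem_biUnion] at hv
    obtain ⟨i, hi, hv2⟩ := hv
    rw [Finset.mem_range] at hi
    rw [Finset.mem_image] at hv2
    obtain ⟨j, hj, hfj⟩ := hv2
    have hAB : rowA lam i = v ∨ rowB lam i = v := by
      rcases ff_mem (lam := lam) i j with h | h <;> rw [h] at hfj <;> tauto
    have hv1 : 1 ≤ v := by
      have := rowA_pos (lam := lam) i
      have := rowA_le_rowB (lam := lam) i
      omega
    rw [Finset.mem_Icc]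
    refine ⟨hv1, ?_⟩
    rcases inv hstrict hpos hi hAB with
      ⟨t, ht, hveq, _⟩ | ⟨t, ht, hveq, _⟩ | ⟨k, hk, hveq, _⟩ | ⟨k, hk, hveq, _⟩ |
      ⟨k, hk, hveq, _⟩ | ⟨hr, hveq, _⟩ | ⟨hr, hveq, _⟩ <;> omega
  · intro v hv
    rw [Finset.mem_Icc] at hv
    rw [valueSet, Finset.mem_biUnion]
    by_cases hv1 : bC lam < v
    · set t := v - bC lam - 1 with htdef
      have ht : t < oC lam := by omega
      obtain ⟨ha, _, _⟩ := rowFacts_O ht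
      have hOl := Og_lt_length ht
      refine ⟨Og lam t, Finset.mem_range.2 hOl, ?_⟩
      rw [Finset.mem_image]
      refine ⟨0, Finset.mem_range.2 (lv_pos hpos hOl), ?_⟩
      rw [ff_zero hstrict hpos hOl, ha]
      omega
    · by_cases hv2 : 2 * rC lam < v
      · set u := v - 2 * rC lam with hudef
        by_cases hu : u % 2 = 1
        · set k := (u - 1) / 2 with hkdef
          have hk : k < pC lam := by omega
          obtain ⟨ha, _, _, _, _⟩ := rowFacts_Elong hstrict hk
          have hteL : qC lam + 2*k < eC lam := by omega
          have hLl := Eg_lt_length hteL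
          refine ⟨Eg lam (qC lam + 2*k), Finset.mem_range.2 hLl, ?_⟩
          rw [Finset.mem_image]
          refine ⟨0, Finset.mem_range.2 (lv_pos hpos hLl), ?_⟩
          rw [ff_zero hstrict hpos hLl, ha]
          omega
        · set k := (u - 2) / 2 with hkdef
          have hk : k < pC lam := by omega
          obtain ⟨ha, hb, hs, hlt, _⟩ := rowFacts_Elong hstrict hk
          have hteL : qC lam + 2*k < eC lam := by omega
          have hLl := Eg_lt_length hteL
          refine ⟨Eg lam (qC lam + 2*k), Finset.mem_range.2 hLl, ?_⟩
          rw [Finset.mem_image]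
          refine ⟨lam.getD (Eg lam (qC lam + 2*k)) 0 - 1, Finset.mem_range.2 (by
            have := lv_pos hpos hLl; omega), ?_⟩
          rw [ff, if_neg (by omega), hb, ha]
          omega
      · have hr : rC lam = 1 := by omega
        obtain ⟨ha, hb, hs, hlam2⟩ := rowFacts_Esingle hpos hr
        have hte : qC lam + 2*pC lam < eC lam := by omega
        have hXl := Eg_lt_length hte
        refine ⟨Eg lam (qC lam + 2*pC lam), Finset.mem_range.2 hXl, ?_⟩
        rw [Finset.mem_image]
        rcases (by omega : v = 1 ∨ v = 2) with rfl | rfl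
        · refine ⟨0, Finset.mem_range.2 (by omega), ?_⟩
          rw [ff_zero hstrict hpos hXl, ha]
        · refine ⟨1, Finset.mem_range.2 (by omega), ?_⟩
          rw [ff, if_neg (by omega), hb]

lemma barNum_eq (hstrict : lam.Chain' (· > ·)) (hpos : ∀ x ∈ lam, 0 < x) :
    barNum lam (ff lam) = bC lam + oC lam := by
  rw [barNum, valueSet_eq hstrict hpos, Nat.card_Icc]
  omega

lemma target_eq :
    bC lam + oC lam = max (lam.countP (fun x => decide (x % 2 = 1)))
      (lam.countP (fun x => decide (x % 2 = 0)) + lam.length % 2) := by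
  rw [countP_odd_eq, countP_even_eq, ← oC_add_eC]
  have hpr := pr_def (lam := lam)
  have hq : qC lam = min (oC lam) (eC lam) := rfl
  have hbCd : bC lam = 2 * pC lam + 2 * rC lam := rfl
  omega

end Basic
end SrankUB

/-- Upper bound half of Clifford's srank formula: there exists a bar tableau of
shape `λ` with exactly `max(o, e + (ℓ(λ) mod 2))` bars. -/
theorem srank_upper_bound (lam : List ℕ) (hstrict : lam.Chain' (· > ·))
    (hpos : ∀ x ∈ lam, 0 < x) :
    ∃ f, IsBarTableau lam f ∧
      barNum lam f = max (lam.countP (fun x => decide (x % 2 = 1)))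
        (lam.countP (fun x => decide (x % 2 = 0)) + lam.length % 2) := by
  refine ⟨SrankUB.ff lam, ⟨?_, ?_, ?_, ?_, ?_⟩, ?_⟩
  · intro i j hi hj
    rcases SrankUB.ff_mem (lam := lam) i j with h | h <;> rw [h]
    · exact SrankUB.rowA_pos i
    · exact le_trans (SrankUB.rowA_pos i) (SrankUB.rowA_le_rowB i)
  · intro i j j' hi hjj' hj'
    have hab := SrankUB.rowA_le_rowB (lam := lam) i
    rw [SrankUB.ff, SrankUB.ff]
    split_ifs with h1 h2 <;> omega
  · exact SrankUB.cell_cond hstrict hpos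
  · exact SrankUB.rows_cond hstrict hpos
  · exact SrankUB.partial_cond hstrict hpos
  · rw [SrankUB.barNum_eq hstrict hpos, SrankUB.target_eq]
end

section
/- Let λ/μ be a skew shape with strict λ and μ. For a configuration C of 0's (a placement of |μ| zeros in S(λ) whose rows, after reordering, give S(μ)), define κ(C) = o_s + 2e_s + max(o_r, e_r + ((e_r + o_r) mod 2)), where o_r, e_r count zero-free nonempty rows of odd/even length and o_s, e_s count rows containing some 0 with an odd/positive-even number of blank squares. If C' is obtained from C by exchanging the 0's of two rows so that a row of type (e,e) and a row of type (∅,o) become types (∅,e) and (e,o) respectively, then κ(C') ≤ κ(C). -/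
/-- `κ = o_s + 2 e_s + max(o_r, e_r + ((e_r + o_r) mod 2))`, where `o_r`
(resp. `e_r`) counts zero-free nonempty rows of odd (resp. even) length, and
`o_s` (resp. `e_s`) counts rows containing a `0` with an odd (resp. positive
even) number of blank squares. -/
def kappa (os es orr er : ℕ) : ℕ := os + 2 * es + max orr (er + (er + orr) % 2)

/-- Exchanging the `0`'s of a row of type `(e,e)` and a row of type `(∅,o)` so
that they become types `(∅,e)` and `(e,o)` (so `o_s' = o_s + 1`,
`e_s' = e_s - 1`, `o_r' = o_r - 1`, `e_r' = e_r + 1`) does not increase `κ`. -/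
theorem kappa_exchange_ee_emptyo (os es orr er os' es' orr' er' : ℕ)
    (h1 : os' = os + 1) (h2 : es = es' + 1) (h3 : orr = orr' + 1)
    (h4 : er' = er + 1) :
    kappa os' es' orr' er' ≤ kappa os es orr er := by
  subst h1 h2 h3 h4
  simp only [kappa]
  omega
end
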